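/- Let M be a compact smooth manifold and φ₁, φ₂ smooth real functions on M, λ > 0, satisfying log(det(ĝ + Hess_ℂ φᵢ)/det ĝ) = λφᵢ + F with ĝ + Hess_ℂ φᵢ > 0 (i = 1,2), where Hess_ℂ denotes the complex Hessian with respect to fixed holomorphic coordinates on a compact complex manifold and F is a fixed smooth function. Then φ₁ = φ₂. -/

import Mathlib

open ComplexOrder Matrix

/-- Wirtinger derivative `∂f/∂z^i`. -/
noncomputable def wirtD {n : ℕ} (f : (Fin n → ℂ) → ℂ) (i : Fin n) (z : Fin n → ℂ) : ℂ :=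
  (1 / 2) * (fderiv ℝ f z (Pi.single i 1) - Complex.I * fderiv ℝ f z (Pi.single i Complex.I))

/-- Conjugate Wirtinger derivative `∂f/∂z̄^j`. -/
noncomputable def wirtDBar {n : ℕ} (f : (Fin n → ℂ) → ℂ) (j : Fin n) (z : Fin n → ℂ) : ℂ :=
  (1 / 2) * (fderiv ℝ f z (Pi.single j 1) + Complex.I * fderiv ℝ f z (Pi.single j Complex.I))

/-- Complex Hessian `(∂²φ/∂z^i∂z̄^j)` of a real function in the fixed holomorphic coordinates. -/
noncomputable def hessC {n : ℕ} (φ : (Fin n → ℂ) → ℝ) (z : Fin n → ℂ) :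
    Matrix (Fin n) (Fin n) ℂ :=
  Matrix.of fun i j => wirtD (fun w => wirtDBar (fun v => (φ v : ℂ)) j w) i z

/-- Invariance under the unit lattice translations: compactness (complex torus model of a
compact complex manifold with fixed holomorphic coordinates). -/
def LatticePeriodic {n : ℕ} {X : Type*} (f : (Fin n → ℂ) → X) : Prop :=
  ∀ (z : Fin n → ℂ) (i : Fin n),
    f (z + Pi.single i 1) = f z ∧ f (z + Pi.single i Complex.I) = f z



lemma det_one_add_posSemidef {n : ℕ} {Q : Matrix (Fin n) (Fin n) ℂ} (hQ : Q.PosSemidef) :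
    1 ≤ (1 + Q).det := by
  have hH := hQ.isHermitian
  have hspec := hH.spectral_theorem
  set U : Matrix (Fin n) (Fin n) ℂ := (hH.eigenvectorUnitary : Matrix (Fin n) (Fin n) ℂ) with hU
  have hUU : U * star U = 1 := Matrix.mem_unitaryGroup_iff.mp hH.eigenvectorUnitary.2
  have hUU' : star U * U = 1 := Matrix.mem_unitaryGroup_iff'.mp hH.eigenvectorUnitary.2
  set D : Matrix (Fin n) (Fin n) ℂ := Matrix.diagonal (RCLike.ofReal ∘ hH.eigenvalues) with hD
  have h1 : (1 + Q) = U * (1 + D) * star U := by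
    rw [Matrix.mul_add, Matrix.add_mul, Matrix.mul_one, hUU]
    exact congrArg (1 + ·) hspec
  have h2 : (1 + Q).det = (1 + D).det := by
    rw [h1, Matrix.det_mul, Matrix.det_mul, mul_comm, ← mul_assoc, ← Matrix.det_mul, hUU',
      Matrix.det_one, one_mul]
  have h3 : (1 + D).det = ∏ i, ((1 + hH.eigenvalues i : ℝ) : ℂ) := by
    rw [hD, ← Matrix.diagonal_one, Matrix.diagonal_add, Matrix.det_diagonal]
    refine Finset.prod_congr rfl fun i _ => ?_
    simp
  rw [h2, h3]
  have hcast : ((∏ i, (1 + hH.eigenvalues i) : ℝ) : ℂ) = ∏ i, ((1 + hH.eigenvalues i : ℝ) : ℂ) := by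
    push_cast; rfl
  rw [← hcast]
  have hprod : (1:ℝ) ≤ ∏ i, (1 + hH.eigenvalues i) := by
    calc (1:ℝ) = ∏ _i : Fin n, (1:ℝ) := by simp
      _ ≤ _ := Finset.prod_le_prod (fun i _ => by norm_num)
          (fun i _ => by linarith [hQ.eigenvalues_nonneg i])
  exact_mod_cast hprod

open scoped MatrixOrder in
lemma det_mono_posDef {n : ℕ} {A P : Matrix (Fin n) (Fin n) ℂ} (hA : A.PosDef)
    (hP : P.PosSemidef) : A.det ≤ (A + P).det := by
  classical
  set S := CFC.sqrt A with hS
  have hSsd : S.PosSemidef := (CFC.sqrt_nonneg A).posSemidef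
  have hSsq : S * S = A := by
    have := CFC.sq_sqrt A hA.posSemidef.nonneg
    rwa [pow_two] at this
  have hSH : S.IsHermitian := hSsd.isHermitian
  have hSdet : S.det ≠ 0 := by
    intro h
    have : A.det = 0 := by rw [← hSsq, Matrix.det_mul, h, mul_zero]
    exact (hA.det_pos.ne' this)
  have hSinv : S * S⁻¹ = 1 := Matrix.mul_nonsing_inv S hSdet.isUnit
  have hSinv' : S⁻¹ * S = 1 := Matrix.nonsing_inv_mul S hSdet.isUnit
  have hSinvH : (S⁻¹)ᴴ = S⁻¹ := by rw [Matrix.conjTranspose_nonsing_inv, hSH.eq]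
  set Q := S⁻¹ * P * S⁻¹ with hQdef
  have hQ : Q.PosSemidef := by
    have := hP.conjTranspose_mul_mul_same (B := S⁻¹)
    rwa [hSinvH] at this
  have h1 : A + P = S * (1 + Q) * S := by
    rw [Matrix.mul_add, Matrix.add_mul, Matrix.mul_one, hSsq, hQdef]
    congr 1
    symm
    calc S * (S⁻¹ * P * S⁻¹) * S = (S * S⁻¹) * P * (S⁻¹ * S) := by
          simp only [Matrix.mul_assoc]
      _ = P := by rw [hSinv, hSinv', Matrix.one_mul, Matrix.mul_one]
  have h2 : (A + P).det = A.det * (1 + Q).det := by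
    rw [h1, Matrix.det_mul, Matrix.det_mul, mul_comm, ← mul_assoc]
    congr 1
    rw [mul_comm, ← Matrix.det_mul, hSsq]
  rw [h2]
  nth_rewrite 1 [← mul_one A.det]
  exact mul_le_mul_of_nonneg_left (det_one_add_posSemidef hQ) hA.det_pos.le


lemma int_translate {n : ℕ} {X : Type*} {u : (Fin n → ℂ) → X} {s : Fin n → ℂ}
    (h : ∀ z, u (z + s) = u z) : ∀ (m : ℤ) (z), u (z + m • s) = u z := by
  have hinv : ∀ z, u (z - s) = u z := fun z => by
    have := h (z - s); rw [sub_add_cancel] at this; exact this.symm ▸ rfl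
  intro m
  induction m using Int.induction_on with
  | zero => simp
  | succ k ih =>
    intro z
    have e : z + ((k:ℤ)+1) • s = (z + s) + (k:ℤ) • s := by
      rw [add_zsmul, one_zsmul]; abel
    rw [e, ih, h]
  | pred k ih =>
    intro z
    have e : z + (-(k:ℤ)-1) • s = (z - s) + (-(k:ℤ)) • s := by
      rw [sub_zsmul, one_zsmul]; abel
    rw [e, ih, hinv]

lemma lattice_translate {n : ℕ} {X : Type*} {u : (Fin n → ℂ) → X} (hper : LatticePeriodic u) :
    ∀ (s : Finset (Fin n)) (m k : Fin n → ℤ) (z),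
      u (z + ∑ i ∈ s, ((m i) • Pi.single i (1:ℂ) + (k i) • Pi.single i Complex.I)) = u z := by
  intro s
  induction s using Finset.induction_on with
  | empty => simp
  | @insert a t ha ih =>
    intro m k z
    rw [Finset.sum_insert ha, ← add_assoc, ← add_assoc, ih]
    rw [int_translate (fun w => (hper w a).2) (k a)]
    exact int_translate (fun w => (hper w a).1) (m a) z

lemma exists_max_of_latticePeriodic {n : ℕ} {u : (Fin n → ℂ) → ℝ} (hc : Continuous u)
    (hper : LatticePeriodic u) : ∃ z₀, ∀ z, u z ≤ u z₀ := by
  obtain ⟨z₀, -, hmax⟩ := (isCompact_closedBall (0 : Fin n → ℂ) 2).exists_isMaxOn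
    ⟨0, Metric.mem_closedBall_self (by norm_num)⟩ hc.continuousOn
  refine ⟨z₀, fun z => ?_⟩
  set m : Fin n → ℤ := fun i => -⌊(z i).re⌋ with hm
  set k : Fin n → ℤ := fun i => -⌊(z i).im⌋ with hk
  set w := z + ∑ i, ((m i) • Pi.single i (1:ℂ) + (k i) • Pi.single i Complex.I) with hw
  have hwz : u w = u z := lattice_translate hper Finset.univ m k z
  have hwi : ∀ i, w i = z i + ((m i : ℂ) + (k i : ℂ) * Complex.I) := by
    intro i
    simp only [hw, Pi.add_apply, Finset.sum_apply, Pi.add_apply, Pi.smul_apply,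
      Pi.single_apply, zsmul_eq_mul]
    congr 1
    rw [Finset.sum_add_distrib]
    congr 1 <;>
      simp [Pi.single_apply, mul_ite, mul_one, mul_zero, Finset.sum_ite_eq]
  have hwmem : w ∈ Metric.closedBall (0 : Fin n → ℂ) 2 := by
    rw [Metric.mem_closedBall, dist_zero_right]
    refine (pi_norm_le_iff_of_nonneg (by norm_num)).mpr fun i => ?_
    have hre : (w i).re = Int.fract ((z i).re) := by
      rw [hwi i, Int.fract]
      simp only [hm, Complex.add_re, Complex.mul_re, Complex.I_re, Complex.I_im,
        Complex.intCast_re, Complex.intCast_im]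
      push_cast; ring
    have him : (w i).im = Int.fract ((z i).im) := by
      rw [hwi i, Int.fract]
      simp only [hk, Complex.add_im, Complex.mul_im, Complex.I_re, Complex.I_im,
        Complex.intCast_re, Complex.intCast_im]
      push_cast; ring
    calc ‖w i‖ ≤ |(w i).re| + |(w i).im| := Complex.norm_le_abs_re_add_abs_im (w i)
      _ ≤ 1 + 1 := by
          rw [hre, him]
          gcongr <;> rw [abs_of_nonneg (Int.fract_nonneg _)] <;>
            exact (Int.fract_lt_one _).le
      _ = 2 := by norm_num
  rw [← hwz]
  exact hmax hwmem


lemma hasFDerivAt_fderiv_apply {n : ℕ} {F : Type*} [NormedAddCommGroup F] [NormedSpace ℝ F]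
    {u : (Fin n → ℂ) → F} (hu : ContDiff ℝ (⊤ : ℕ∞) u) (z c : Fin n → ℂ) :
    HasFDerivAt (fun w => fderiv ℝ u w c)
      ((ContinuousLinearMap.apply ℝ F c).comp (fderiv ℝ (fderiv ℝ u) z)) z := by
  have h1 : HasFDerivAt (fderiv ℝ u) (fderiv ℝ (fderiv ℝ u) z) z :=
    ((hu.fderiv_right (m := (⊤ : ℕ∞)) (by simp)).differentiable (by simp) z).hasFDerivAt
  exact (ContinuousLinearMap.apply ℝ F c).hasFDerivAt.comp z h1

lemma hessC_eq {n : ℕ} {φ : (Fin n → ℂ) → ℝ} (hφ : ContDiff ℝ (⊤ : ℕ∞) φ) (z : Fin n → ℂ)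
    (i j : Fin n) :
    hessC φ z i j =
      (1/4 : ℂ) * (fderiv ℝ (fderiv ℝ (fun v => (φ v : ℂ))) z (Pi.single i 1) (Pi.single j 1)
        + Complex.I * fderiv ℝ (fderiv ℝ (fun v => (φ v : ℂ))) z (Pi.single i 1) (Pi.single j Complex.I)
        - Complex.I * fderiv ℝ (fderiv ℝ (fun v => (φ v : ℂ))) z (Pi.single i Complex.I) (Pi.single j 1)
        + fderiv ℝ (fderiv ℝ (fun v => (φ v : ℂ))) z (Pi.single i Complex.I) (Pi.single j Complex.I)) := by
  have hf : ContDiff ℝ (⊤ : ℕ∞) (fun v => (φ v : ℂ)) := Complex.ofRealCLM.contDiff.comp hφ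
  set f : (Fin n → ℂ) → ℂ := fun v => (φ v : ℂ) with hfdef
  set β := fderiv ℝ (fderiv ℝ f) z with hβ
  have h1 : HasFDerivAt (fun w => fderiv ℝ f w (Pi.single j 1))
      ((ContinuousLinearMap.apply ℝ ℂ (Pi.single j 1)).comp β) z :=
    hasFDerivAt_fderiv_apply hf z _
  have h2 : HasFDerivAt (fun w => fderiv ℝ f w (Pi.single j Complex.I))
      ((ContinuousLinearMap.apply ℝ ℂ (Pi.single j Complex.I)).comp β) z :=
    hasFDerivAt_fderiv_apply hf z _
  have h3 : HasFDerivAt (fun w => wirtDBar f j w)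
      ((1/2 : ℂ) • (((ContinuousLinearMap.apply ℝ ℂ (Pi.single j 1)).comp β)
        + Complex.I • ((ContinuousLinearMap.apply ℝ ℂ (Pi.single j Complex.I)).comp β))) z := by
    have := (h1.add (h2.const_mul Complex.I)).const_mul (1/2 : ℂ)
    convert this using 2 <;> rfl
  have h4 := h3.fderiv
  show wirtD (fun w => wirtDBar f j w) i z = _
  rw [wirtD, h4]
  simp only [ContinuousLinearMap.smul_apply, ContinuousLinearMap.add_apply,
    ContinuousLinearMap.comp_apply, ContinuousLinearMap.apply_apply, smul_eq_mul]
  ring_nf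
  rw [Complex.I_sq]
  ring


lemma fderiv_fderiv_ofReal {n : ℕ} {φ : (Fin n → ℂ) → ℝ} (hφ : ContDiff ℝ (⊤ : ℕ∞) φ)
    (z x y : Fin n → ℂ) :
    fderiv ℝ (fderiv ℝ (fun v => (φ v : ℂ))) z x y = ((fderiv ℝ (fderiv ℝ φ) z x y : ℝ) : ℂ) := by
  have hdφ : ∀ w, HasFDerivAt φ (fderiv ℝ φ w) w := fun w =>
    (hφ.differentiable (by simp) w).hasFDerivAt
  have e1 : fderiv ℝ (fun v => (φ v : ℂ)) = fun w => Complex.ofRealCLM.comp (fderiv ℝ φ w) := by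
    funext w
    have h : HasFDerivAt (fun v => (φ v : ℂ)) (Complex.ofRealCLM.comp (fderiv ℝ φ w)) w :=
      Complex.ofRealCLM.hasFDerivAt.comp w (hdφ w)
    exact h.fderiv
  have hB : HasFDerivAt (fderiv ℝ φ) (fderiv ℝ (fderiv ℝ φ) z) z :=
    ((hφ.fderiv_right (m := (⊤ : ℕ∞)) (by simp)).differentiable (by simp) z).hasFDerivAt
  have h2 : HasFDerivAt (fun w => Complex.ofRealCLM.comp (fderiv ℝ φ w))
      ((ContinuousLinearMap.compL ℝ (Fin n → ℂ) ℝ ℂ Complex.ofRealCLM).comp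
        (fderiv ℝ (fderiv ℝ φ) z)) z :=
    (ContinuousLinearMap.compL ℝ (Fin n → ℂ) ℝ ℂ Complex.ofRealCLM).hasFDerivAt.comp z hB
  rw [e1, h2.fderiv]
  rfl

lemma sec_symm {n : ℕ} {φ : (Fin n → ℂ) → ℝ} (hφ : ContDiff ℝ (⊤ : ℕ∞) φ) (z x y : Fin n → ℂ) :
    fderiv ℝ (fderiv ℝ φ) z x y = fderiv ℝ (fderiv ℝ φ) z y x := by
  have hB : HasFDerivAt (fderiv ℝ φ) (fderiv ℝ (fderiv ℝ φ) z) z :=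
    ((hφ.fderiv_right (m := (⊤ : ℕ∞)) (by simp)).differentiable (by simp) z).hasFDerivAt
  exact second_derivative_symmetric (fun w => (hφ.differentiable (by simp) w).hasFDerivAt) hB x y

lemma single_decomp {n : ℕ} (i : Fin n) (c : ℂ) :
    (Pi.single i c : Fin n → ℂ)
      = c.re • (Pi.single i 1 : Fin n → ℂ) + c.im • (Pi.single i Complex.I : Fin n → ℂ) := by
  ext j
  rcases eq_or_ne j i with rfl | h
  · simp [Complex.real_smul]
  · simp [Pi.single_apply, h]

lemma secondDeriv_nonpos {n : ℕ} {u : (Fin n → ℂ) → ℝ} (hu : ContDiff ℝ (⊤ : ℕ∞) u)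
    {z₀ : Fin n → ℂ} (hmax : ∀ z, u z ≤ u z₀) (v : Fin n → ℂ) :
    fderiv ℝ (fderiv ℝ u) z₀ v v ≤ 0 := by
  set line : ℝ → (Fin n → ℂ) := fun t => z₀ + t • v with hlinedef
  have hline : ∀ t, HasDerivAt line v t := by
    intro t
    have : HasDerivAt (fun t : ℝ => t • v) ((1:ℝ) • v) t := (hasDerivAt_id t).smul_const v
    simpa [hlinedef] using this.const_add z₀
  have hline0 : line 0 = z₀ := by simp [hlinedef]
  have hlinec : Continuous line := continuous_const.add (continuous_id.smul continuous_const)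
  set g : ℝ → ℝ := fun t => u (line t) with hgdef
  set h : ℝ → ℝ := fun t => fderiv ℝ u (line t) v with hhdef
  have hg : ∀ t, HasDerivAt g (h t) t := fun t =>
    ((hu.differentiable (by simp) (line t)).hasFDerivAt).comp_hasDerivAt t (hline t)
  have hh : HasDerivAt h (fderiv ℝ (fderiv ℝ u) z₀ v v) 0 := by
    have hF := hasFDerivAt_fderiv_apply hu z₀ v
    rw [← hline0] at hF
    have h2 := hF.comp_hasDerivAt 0 (hline 0)
    rw [hline0] at h2
    exact h2
  have h00 : h 0 = 0 := by
    have hlm : IsLocalMax g 0 := Filter.Eventually.of_forall fun t => by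
      show u (line t) ≤ u (line 0)
      rw [hline0]; exact hmax _
    have hd := hlm.deriv_eq_zero
    rwa [(hg 0).deriv] at hd
  by_contra hcon
  push_neg at hcon
  set c := fderiv ℝ (fderiv ℝ u) z₀ v v with hcdef
  have hslope : Filter.Tendsto (slope h 0) (nhdsWithin 0 {0}ᶜ) (nhds c) :=
    hasDerivAt_iff_tendsto_slope.mp hh
  have hev : ∀ᶠ t in nhdsWithin 0 {0}ᶜ, c/2 < slope h 0 t :=
    hslope.eventually (eventually_gt_nhds (by linarith))
  have hev' : ∀ᶠ t in nhdsWithin 0 (Set.Ioi 0), c/2 < slope h 0 t :=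
    hev.filter_mono (nhdsWithin_mono 0 (fun t ht => by
      simp only [Set.mem_compl_iff, Set.mem_singleton_iff]
      exact ne_of_gt ht))
  obtain ⟨δ, hδ, hsub⟩ := mem_nhdsGT_iff_exists_Ioo_subset.mp hev'
  rw [Set.mem_Ioi] at hδ
  have hpos : ∀ t ∈ Set.Ioo (0:ℝ) δ, 0 < h t := by
    intro t ht
    have hst := hsub ht
    rw [Set.mem_setOf_eq, slope_def_field] at hst
    have h1 : 0 < (h t - h 0) / (t - 0) := lt_trans (by linarith) hst
    rw [h00, sub_zero, sub_zero] at h1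
    have := mul_pos h1 ht.1
    rwa [div_mul_cancel₀ _ (ne_of_gt ht.1)] at this
  have hmono : StrictMonoOn g (Set.Icc 0 δ) := by
    apply strictMonoOn_of_deriv_pos (convex_Icc 0 δ)
    · exact (hu.continuous.comp hlinec).continuousOn
    · intro t ht
      rw [interior_Icc] at ht
      rw [(hg t).deriv]
      exact hpos t ht
  have hlt : g 0 < g δ :=
    hmono (Set.left_mem_Icc.mpr hδ.le) (Set.right_mem_Icc.mpr hδ.le) hδ
  have hle : g δ ≤ g 0 := by
    show u (line δ) ≤ u (line 0)
    rw [hline0]; exact hmax _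
  linarith


lemma key_alg (a b b' d : ℝ) (c c' : ℂ) :
    c * ((1/4:ℂ) * (↑a + Complex.I * ↑b - Complex.I * ↑b' + ↑d) * (starRingEnd ℂ) c')
      = (1/4:ℂ) * (((c.re*c'.re*a + c.re*c'.im*b + c.im*c'.re*b' + c.im*c'.im*d
          + ((Complex.I*c).re*(Complex.I*c').re*a + (Complex.I*c).re*(Complex.I*c').im*b
            + (Complex.I*c).im*(Complex.I*c').re*b' + (Complex.I*c).im*(Complex.I*c').im*d) : ℝ) : ℂ)
        + Complex.I * (((c.re*(Complex.I*c').re*a + c.re*(Complex.I*c').im*b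
            + c.im*(Complex.I*c').re*b' + c.im*(Complex.I*c').im*d
          - ((Complex.I*c).re*c'.re*a + (Complex.I*c).re*c'.im*b
            + (Complex.I*c).im*c'.re*b' + (Complex.I*c).im*c'.im*d) : ℝ) : ℂ))) := by
  apply Complex.ext <;>
    simp [Complex.mul_re, Complex.mul_im, Complex.add_re, Complex.add_im, Complex.sub_re,
      Complex.sub_im, Complex.I_re, Complex.I_im, Complex.ofReal_re, Complex.ofReal_im,
      Complex.conj_re, Complex.conj_im, Complex.div_re, Complex.div_im] <;>
    ring


lemma hessC_diff_posSemidef {n : ℕ} {φ₁ φ₂ : (Fin n → ℂ) → ℝ}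
    (h₁ : ContDiff ℝ (⊤ : ℕ∞) φ₁) (h₂ : ContDiff ℝ (⊤ : ℕ∞) φ₂) {z₀ : Fin n → ℂ}
    (hmax : ∀ z, φ₁ z - φ₂ z ≤ φ₁ z₀ - φ₂ z₀) :
    (hessC φ₂ z₀ - hessC φ₁ z₀).PosSemidef := by
  classical
  set e : Fin n → (Fin n → ℂ) := fun i => Pi.single i 1 with he
  set f : Fin n → (Fin n → ℂ) := fun i => Pi.single i Complex.I with hf
  set B₁ := fderiv ℝ (fderiv ℝ φ₁) z₀ with hB₁
  set B₂ := fderiv ℝ (fderiv ℝ φ₂) z₀ with hB₂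
  set D : (Fin n → ℂ) → (Fin n → ℂ) → ℝ := fun x y => B₂ x y - B₁ x y with hD
  have hDsymm : ∀ x y, D x y = D y x := fun x y => by
    simp only [hD, hB₁, hB₂]
    rw [sec_symm h₁ z₀ x y, sec_symm h₂ z₀ x y]
  have hentry : ∀ i j, (hessC φ₂ z₀ - hessC φ₁ z₀) i j
      = (1/4:ℂ) * (↑(D (e i) (e j)) + Complex.I * ↑(D (e i) (f j))
          - Complex.I * ↑(D (f i) (e j)) + ↑(D (f i) (f j))) := by
    intro i j
    rw [Matrix.sub_apply, hessC_eq h₂ z₀ i j, hessC_eq h₁ z₀ i j,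
      fderiv_fderiv_ofReal h₁, fderiv_fderiv_ofReal h₁, fderiv_fderiv_ofReal h₁,
      fderiv_fderiv_ofReal h₁, fderiv_fderiv_ofReal h₂, fderiv_fderiv_ofReal h₂,
      fderiv_fderiv_ofReal h₂, fderiv_fderiv_ofReal h₂]
    simp only [hD, hB₁, hB₂, he, hf]
    push_cast
    ring
  have hDexp : ∀ (i j : Fin n) (c c' : ℂ),
      D (Pi.single i c) (Pi.single j c')
        = c.re*c'.re * D (e i) (e j) + c.re*c'.im * D (e i) (f j)
          + c.im*c'.re * D (f i) (e j) + c.im*c'.im * D (f i) (f j) := by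
    intro i j c c'
    simp only [hD, he, hf]
    rw [single_decomp i c, single_decomp j c']
    simp only [_root_.map_add, _root_.map_smul, ContinuousLinearMap.add_apply, ContinuousLinearMap.coe_smul',
      Pi.smul_apply, smul_eq_mul]
    ring
  have hherm : (hessC φ₂ z₀ - hessC φ₁ z₀).IsHermitian := by
    refine Matrix.ext fun i j => ?_
    rw [Matrix.conjTranspose_apply, hentry j i, hentry i j,
      hDsymm (e j) (e i), hDsymm (e j) (f i), hDsymm (f j) (e i), hDsymm (f j) (f i)]
    simp only [Complex.star_def, _root_.map_mul, _root_.map_add, _root_.map_sub, Complex.conj_ofReal,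
      Complex.conj_I, _root_.map_div₀, _root_.map_one, _root_.map_ofNat]
    ring
  refine Matrix.PosSemidef.of_dotProduct_mulVec_nonneg hherm fun x => ?_
  set w : Fin n → ℂ := star x with hw
  have hwi : ∀ i, w i = (starRingEnd ℂ) (x i) := fun i => rfl
  have hbil : ∀ (B : (Fin n → ℂ) →L[ℝ] (Fin n → ℂ) →L[ℝ] ℝ) (u v : Fin n → ℂ),
      B u v = ∑ i, ∑ j, B (Pi.single i (u i)) (Pi.single j (v j)) := by
    intro B u v
    conv_lhs => rw [← Finset.univ_sum_single u, ← Finset.univ_sum_single v]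
    simp only [_root_.map_sum, ContinuousLinearMap.sum_apply]
    exact Finset.sum_comm
  have hDbil : ∀ (u v : Fin n → ℂ),
      D u v = ∑ i, ∑ j, D (Pi.single i (u i)) (Pi.single j (v j)) := by
    intro u v
    simp only [hD]
    rw [hbil B₂ u v, hbil B₁ u v, ← Finset.sum_sub_distrib]
    exact Finset.sum_congr rfl fun i _ => by rw [← Finset.sum_sub_distrib]
  have hIw : ∀ i, (Complex.I • w) i = Complex.I * w i := fun i => rfl
  have expand : dotProduct (star x) ((hessC φ₂ z₀ - hessC φ₁ z₀).mulVec x)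
      = ∑ i, ∑ j, (w i) * ((hessC φ₂ z₀ - hessC φ₁ z₀) i j * x j) := by
    simp only [dotProduct, Matrix.mulVec, Finset.mul_sum, ← hw]
  have key : ∀ i j, (w i) * ((hessC φ₂ z₀ - hessC φ₁ z₀) i j * x j)
      = (1/4:ℂ) * (↑(D (Pi.single i (w i)) (Pi.single j (w j))
            + D (Pi.single i ((Complex.I • w) i)) (Pi.single j ((Complex.I • w) j)))
          + Complex.I * ↑(D (Pi.single i (w i)) (Pi.single j ((Complex.I • w) j))
            - D (Pi.single i ((Complex.I • w) i)) (Pi.single j (w j)))) := by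
    intro i j
    have hxj : x j = (starRingEnd ℂ) (w j) := by rw [hwi j, Complex.conj_conj]
    rw [hentry i j, hxj, hIw, hIw]
    rw [hDexp i j (w i) (w j), hDexp i j (Complex.I * w i) (Complex.I * w j),
      hDexp i j (w i) (Complex.I * w j), hDexp i j (Complex.I * w i) (w j)]
    have hk := key_alg (D (e i) (e j)) (D (e i) (f j)) (D (f i) (e j)) (D (f i) (f j)) (w i) (w j)
    push_cast at hk ⊢
    linear_combination hk
  rw [expand]
  have sum_eq : ∑ i, ∑ j, (w i) * ((hessC φ₂ z₀ - hessC φ₁ z₀) i j * x j)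
      = (1/4:ℂ) * (↑(D w w + D (Complex.I • w) (Complex.I • w))
          + Complex.I * ↑(D w (Complex.I • w) - D (Complex.I • w) w)) := by
    rw [Finset.sum_congr rfl fun i _ => Finset.sum_congr rfl fun j _ => key i j]
    rw [hDbil w w, hDbil (Complex.I • w) (Complex.I • w), hDbil w (Complex.I • w),
      hDbil (Complex.I • w) w]
    push_cast
    simp only [Finset.sum_add_distrib, Finset.sum_sub_distrib, ← Finset.mul_sum]
  rw [sum_eq, hDsymm w (Complex.I • w), sub_self, Complex.ofReal_zero, mul_zero, add_zero]
  have hsecsub : ∀ v, fderiv ℝ (fderiv ℝ (fun z => φ₁ z - φ₂ z)) z₀ v v = B₁ v v - B₂ v v := by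
    intro v
    have e1 : fderiv ℝ (fun z => φ₁ z - φ₂ z) = fun w => fderiv ℝ φ₁ w - fderiv ℝ φ₂ w :=
      funext fun w => fderiv_sub (h₁.differentiable (by simp) w) (h₂.differentiable (by simp) w)
    have e2 : fderiv ℝ (fun w => fderiv ℝ φ₁ w - fderiv ℝ φ₂ w) z₀
        = fderiv ℝ (fderiv ℝ φ₁) z₀ - fderiv ℝ (fderiv ℝ φ₂) z₀ :=
      fderiv_sub ((h₁.fderiv_right (m := (⊤ : ℕ∞)) (by simp)).differentiable (by simp) z₀)
        ((h₂.fderiv_right (m := (⊤ : ℕ∞)) (by simp)).differentiable (by simp) z₀)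
    rw [e1, e2]
    simp [ContinuousLinearMap.sub_apply, hB₁, hB₂]
  have hDvv : ∀ v, 0 ≤ D v v := by
    intro v
    have := secondDeriv_nonpos (h₁.sub h₂) hmax v
    rw [hsecsub v] at this
    simp only [hD]
    linarith
  have ht : 0 ≤ D w w + D (Complex.I • w) (Complex.I • w) :=
    add_nonneg (hDvv w) (hDvv (Complex.I • w))
  have : (1/4:ℂ) * ↑(D w w + D (Complex.I • w) (Complex.I • w))
      = (((1/4) * (D w w + D (Complex.I • w) (Complex.I • w)) : ℝ) : ℂ) := by
    push_cast; ring
  rw [this]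
  exact Complex.zero_le_real.mpr (mul_nonneg (by norm_num) ht)


lemma one_side {n : ℕ} (ghat : (Fin n → ℂ) → Matrix (Fin n) (Fin n) ℂ)
    (F φ₁ φ₂ : (Fin n → ℂ) → ℝ) (lam : ℝ) (hlam : 0 < lam)
    (hg_pos : ∀ z, (ghat z).PosDef)
    (hφ₁_smooth : ContDiff ℝ (⊤ : ℕ∞) φ₁) (hφ₁_per : LatticePeriodic φ₁)
    (hφ₂_smooth : ContDiff ℝ (⊤ : ℕ∞) φ₂) (hφ₂_per : LatticePeriodic φ₂)
    (hpos₁ : ∀ z, (ghat z + hessC φ₁ z).PosDef)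
    (heq₁ : ∀ z, Real.log ((ghat z + hessC φ₁ z).det.re / (ghat z).det.re)
      = lam * φ₁ z + F z)
    (heq₂ : ∀ z, Real.log ((ghat z + hessC φ₂ z).det.re / (ghat z).det.re)
      = lam * φ₂ z + F z) :
    ∀ z, φ₁ z ≤ φ₂ z := by
  set u : (Fin n → ℂ) → ℝ := fun z => φ₁ z - φ₂ z with hu
  have hucont : Continuous u := (hφ₁_smooth.continuous).sub (hφ₂_smooth.continuous)
  have huper : LatticePeriodic u := by
    intro z i
    constructor
    · simp only [hu, (hφ₁_per z i).1, (hφ₂_per z i).1]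
    · simp only [hu, (hφ₁_per z i).2, (hφ₂_per z i).2]
  obtain ⟨z₀, hmax⟩ := exists_max_of_latticePeriodic hucont huper
  have hmax' : ∀ z, φ₁ z - φ₂ z ≤ φ₁ z₀ - φ₂ z₀ := hmax
  have hP : (hessC φ₂ z₀ - hessC φ₁ z₀).PosSemidef :=
    hessC_diff_posSemidef hφ₁_smooth hφ₂_smooth hmax'
  have hdet : (ghat z₀ + hessC φ₁ z₀).det ≤ (ghat z₀ + hessC φ₂ z₀).det := by
    have h := det_mono_posDef (hpos₁ z₀) hP
    have e : ghat z₀ + hessC φ₁ z₀ + (hessC φ₂ z₀ - hessC φ₁ z₀)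
        = ghat z₀ + hessC φ₂ z₀ := by abel
    rwa [e] at h
  have hdetre : (ghat z₀ + hessC φ₁ z₀).det.re ≤ (ghat z₀ + hessC φ₂ z₀).det.re :=
    (Complex.le_def.mp hdet).1
  have hd1 : 0 < (ghat z₀ + hessC φ₁ z₀).det.re := (Complex.lt_def.mp (hpos₁ z₀).det_pos).1
  have hdg : 0 < (ghat z₀).det.re := (Complex.lt_def.mp (hg_pos z₀).det_pos).1
  have hlog : Real.log ((ghat z₀ + hessC φ₁ z₀).det.re / (ghat z₀).det.re)
      ≤ Real.log ((ghat z₀ + hessC φ₂ z₀).det.re / (ghat z₀).det.re) := by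
    apply Real.log_le_log (div_pos hd1 hdg)
    exact div_le_div_of_nonneg_right hdetre hdg.le
  rw [heq₁ z₀, heq₂ z₀] at hlog
  have hz₀ : φ₁ z₀ ≤ φ₂ z₀ := by
    have := (mul_le_mul_iff_right₀ hlam).mp (by linarith : lam * φ₁ z₀ ≤ lam * φ₂ z₀)
    linarith
  intro z
  have := hmax' z
  linarith

/-- Uniqueness for the Monge–Ampère equation
`log(det(ĝ + Hess_ℂ φ)/det ĝ) = λφ + F`, `ĝ + Hess_ℂ φ > 0`, `λ > 0`,
on a compact complex manifold (complex torus model): two solutions coincide. -/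
theorem stmt_5 (n : ℕ) (ghat : (Fin n → ℂ) → Matrix (Fin n) (Fin n) ℂ)
    (F φ₁ φ₂ : (Fin n → ℂ) → ℝ) (lam : ℝ) (hlam : 0 < lam)
    (hg_smooth : ∀ i j, ContDiff ℝ (⊤ : ℕ∞) fun z => ghat z i j)
    (hg_pos : ∀ z, (ghat z).PosDef) (hg_per : LatticePeriodic ghat)
    (hF_smooth : ContDiff ℝ (⊤ : ℕ∞) F) (hF_per : LatticePeriodic F)
    (hφ₁_smooth : ContDiff ℝ (⊤ : ℕ∞) φ₁) (hφ₁_per : LatticePeriodic φ₁)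
    (hφ₂_smooth : ContDiff ℝ (⊤ : ℕ∞) φ₂) (hφ₂_per : LatticePeriodic φ₂)
    (hpos₁ : ∀ z, (ghat z + hessC φ₁ z).PosDef)
    (hpos₂ : ∀ z, (ghat z + hessC φ₂ z).PosDef)
    (heq₁ : ∀ z, Real.log ((ghat z + hessC φ₁ z).det.re / (ghat z).det.re)
      = lam * φ₁ z + F z)
    (heq₂ : ∀ z, Real.log ((ghat z + hessC φ₂ z).det.re / (ghat z).det.re)
      = lam * φ₂ z + F z) :
    φ₁ = φ₂ := by
  funext z
  exact le_antisymm
    (one_side ghat F φ₁ φ₂ lam hlam hg_pos hφ₁_smooth hφ₁_per hφ₂_smooth hφ₂_per hpos₁ heq₁ heq₂ z)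
    (one_side ghat F φ₂ φ₁ lam hlam hg_pos hφ₂_smooth hφ₂_per hφ₁_smooth hφ₁_per hpos₂ heq₂ heq₁ z)
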